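/- Let q, m, ℓ be positive integers with q ≤ m, and set δ = 2^{-2q} (so √δ·2^q = 1). Let g₁,…,g_ℓ : {-1,1}^q × {-1,1}^{m-q} → {-1,1} be Boolean functions such that for each i, |{(χ,ρ) : g_i(χ,ρ) = 1}| ≤ δ·2^m. Let T = {ρ ∈ {-1,1}^{m-q} : there exists i such that χ ↦ g_i(χ,ρ) is not the constant function −1} and let T^c = {-1,1}^{m-q} \ T. Then 2^q·|T| + |T^c| ≤ (ℓ+1)·√δ·2^m. -/

import Mathlib

/-!
A restriction `ρ` lies in `T` only if some `g_i` takes the value `1` at some `(χ, ρ)`, so by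
the union bound `|T| ≤ ℓ·δ·2^m`, while trivially `|T^c| ≤ 2^{m-q}`. Since `2^q·δ = √δ = 2^{-q}`,
this gives `2^q·|T| + |T^c| ≤ ℓ·√δ·2^m + √δ·2^m`.
-/

open Finset

namespace Finset

variable {ι α β : Type*} [Fintype ι] [Fintype α] [Fintype β]

theorem card_filter_exists_le_card_filter_prod (P : α → β → Prop) [DecidableRel P]
    [DecidablePred fun b => ∃ a, P a b] :
    #{b | ∃ a, P a b} ≤ #{p : α × β | P p.1 p.2} := by
  classical
  calc #{b | ∃ a, P a b} = #((univ.filter fun p : α × β => P p.1 p.2).image Prod.snd) := by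
        congr 1; ext b; simp
    _ ≤ _ := card_image_le

theorem card_filter_exists_le_sum (P : ι → β → Prop) [∀ i, DecidablePred (P i)]
    [DecidablePred fun b => ∃ i, P i b] :
    #{b | ∃ i, P i b} ≤ ∑ i, #{b | P i b} := by
  classical
  calc #{b | ∃ i, P i b} = #(univ.biUnion fun i => {b | P i b}) := by
        congr 1; ext b; simp
    _ ≤ _ := card_biUnion_le

end Finset

theorem Real.sqrt_inv_pow_two_mul {x : ℝ} (hx : 0 ≤ x) (n : ℕ) :
    √((x ^ (2 * n))⁻¹) = (x ^ n)⁻¹ := by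
  rw [Real.sqrt_inv, pow_mul', Real.sqrt_sq (by positivity)]

theorem minority_enumeration_work_bound_general (m q ℓ : ℕ)
    (hqm : q ≤ m)
    (δ : ℝ) (hδ : δ = ((2 : ℝ) ^ (2 * q))⁻¹)
    (g : Fin ℓ → (Fin q → Bool) → (Fin (m - q) → Bool) → ℤ)
    (hg : ∀ i χ ρ, g i χ ρ = 1 ∨ g i χ ρ = -1)
    (hclose : ∀ i : Fin ℓ,
      ((Finset.univ.filter
          (fun p : (Fin q → Bool) × (Fin (m - q) → Bool) => g i p.1 p.2 = 1)).card : ℝ)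
        ≤ δ * 2 ^ m) :
    (2 : ℝ) ^ q *
        ((Finset.univ.filter
          (fun ρ : Fin (m - q) → Bool => ∃ i : Fin ℓ, ¬ ∀ χ, g i χ ρ = -1)).card : ℝ)
      + ((Finset.univ.filter
          (fun ρ : Fin (m - q) → Bool => ¬ ∃ i : Fin ℓ, ¬ ∀ χ, g i χ ρ = -1)).card : ℝ)
      ≤ (ℓ + 1) * Real.sqrt δ * 2 ^ m := by
  have hT : (#{ρ | ∃ i : Fin ℓ, ¬ ∀ χ, g i χ ρ = -1} : ℝ) ≤ ℓ * (δ * 2 ^ m) := by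
    have hnonconst : ∀ i ρ, (¬ ∀ χ, g i χ ρ = -1) ↔ ∃ χ, g i χ ρ = 1 := fun i ρ => by
      push Not
      exact exists_congr fun χ => ⟨(hg i χ ρ).resolve_right, fun h => by rw [h]; decide⟩
    simp_rw [hnonconst]
    calc (#{ρ | ∃ i : Fin ℓ, ∃ χ, g i χ ρ = 1} : ℝ)
        ≤ ∑ i, (#{ρ | ∃ χ, g i χ ρ = 1} : ℝ) := mod_cast card_filter_exists_le_sum _
      _ ≤ ∑ i, (#{p : (Fin q → Bool) × (Fin (m - q) → Bool) | g i p.1 p.2 = 1} : ℝ) :=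
        sum_le_sum fun i _ => mod_cast card_filter_exists_le_card_filter_prod _
      _ ≤ ∑ _i : Fin ℓ, δ * 2 ^ m := sum_le_sum fun i _ => hclose i
      _ = ℓ * (δ * 2 ^ m) := by simp
  have hcard_restrictions (T : Finset (Fin (m - q) → Bool)) : (#T : ℝ) ≤ 2 ^ m / 2 ^ q := by
    rw [div_eq_mul_inv, ← pow_sub₀ (2 : ℝ) two_ne_zero hqm]
    exact_mod_cast (card_le_univ T).trans_eq (by simp)
  calc _ ≤ (2 : ℝ) ^ q * (ℓ * (δ * 2 ^ m)) + 2 ^ m / 2 ^ q := by gcongr; exact hcard_restrictions _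
    _ = (ℓ + 1) * √δ * 2 ^ m := by
      rw [hδ, Real.sqrt_inv_pow_two_mul zero_le_two, two_mul, pow_add]
      field_simp

/-- The combinatorial core of the running-time analysis of the minority-assignment
enumeration algorithm 𝒜₃ of Lemma 3.1: with `δ = 2^{-2q}` (so `√δ·2^q = 1`), if each of
`g₁,…,g_ℓ` outputs `1` on at most `δ·2^m` inputs, `T` is the set of restrictions `ρ` of
the last `m-q` variables for which some `g_{i,ρ}` is not the constant `-1`, and `T^c` is
its complement, then `2^q·|T| + |T^c| ≤ (ℓ+1)·√δ·2^m`. -/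
theorem minority_enumeration_work_bound (m q ℓ : ℕ)
    (hq : 0 < q) (hqm : q ≤ m) (hℓ : 0 < ℓ)
    (δ : ℝ) (hδ : δ = ((2 : ℝ) ^ (2 * q))⁻¹)
    (g : Fin ℓ → (Fin q → Bool) → (Fin (m - q) → Bool) → ℤ)
    (hg : ∀ i χ ρ, g i χ ρ = 1 ∨ g i χ ρ = -1)
    (hclose : ∀ i : Fin ℓ,
      ((Finset.univ.filter
          (fun p : (Fin q → Bool) × (Fin (m - q) → Bool) => g i p.1 p.2 = 1)).card : ℝ)
        ≤ δ * 2 ^ m) :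
    (2 : ℝ) ^ q *
        ((Finset.univ.filter
          (fun ρ : Fin (m - q) → Bool => ∃ i : Fin ℓ, ¬ ∀ χ, g i χ ρ = -1)).card : ℝ)
      + ((Finset.univ.filter
          (fun ρ : Fin (m - q) → Bool => ¬ ∃ i : Fin ℓ, ¬ ∀ χ, g i χ ρ = -1)).card : ℝ)
      ≤ (ℓ + 1) * Real.sqrt δ * 2 ^ m :=
  minority_enumeration_work_bound_general m q ℓ hqm δ hδ g hg hclose
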